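/- arXiv:math/0611223 — 2 statements merged into one kernel-verified Lean document; each statement's English description precedes it below -/
import Mathlib

section
/- For every vector X in R^6, ψ⁺ ∧ (X ⌟ ψ⁺) = X^♭ ∧ ω², where ⌟ denotes interior product, X^♭ is the metric dual 1-form, ω is the standard fundamental 2-form, and ψ⁺ the standard SU(3) 3-form. -/
/-- `V = ℝ⁶`. We identify vectors and covectors via the standard metric, so that
exterior forms are represented as elements of the exterior algebra of `V`. -/
abbrev V : Type := Fin 6 → ℝ

/-- the standard basis `e₁,…,e₆` (0-indexed) -/
def ee (i : Fin 6) : V := Pi.single i 1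

/-- the standard complex structure `J(e_{2i-1}) = e_{2i}` -/
def Jf (X : V) : V := ![-X 1, X 0, -X 3, X 2, -X 5, X 4]

/-- the basis one-forms `e^i` (identified with `e_i` via the metric) -/
noncomputable def e (i : Fin 6) : ExteriorAlgebra ℝ V := ExteriorAlgebra.ι ℝ (ee i)

/-- the fundamental two-form `ω = e^{12} + e^{34} + e^{56}` -/
noncomputable def ω : ExteriorAlgebra ℝ V := e 0 * e 1 + e 2 * e 3 + e 4 * e 5

/-- `ψ⁺ = e^{135} - e^{146} - e^{236} - e^{245}` -/
noncomputable def ψp : ExteriorAlgebra ℝ V :=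
  e 0 * e 2 * e 4 - e 0 * e 3 * e 5 - e 1 * e 2 * e 5 - e 1 * e 3 * e 4

/-- `ψ⁻ = e^{136} + e^{145} + e^{235} - e^{246}` -/
noncomputable def ψm : ExteriorAlgebra ℝ V :=
  e 0 * e 2 * e 5 + e 0 * e 3 * e 4 + e 1 * e 2 * e 4 - e 1 * e 3 * e 5

/-- the metric dual (flat) of a vector -/
noncomputable def flat (x : V) : Module.Dual ℝ V := ∑ i, x i • LinearMap.proj i

/-- interior product (contraction) of a vector with a form -/
noncomputable def icontr (x : V) : ExteriorAlgebra ℝ V →ₗ[ℝ] ExteriorAlgebra ℝ V :=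
  CliffordAlgebra.contractLeft (flat x)

/-- `Λ = ½ Σᵢ Jeᵢ ⌟ eᵢ ⌟`, the metric adjoint of wedging with `ω` -/
noncomputable def lam (u : ExteriorAlgebra ℝ V) : ExteriorAlgebra ℝ V :=
  (1/2 : ℝ) • ∑ i : Fin 6, icontr (Jf (ee i)) (icontr (ee i) u)


lemma e_sq (i : Fin 6) : e i * e i = 0 := ExteriorAlgebra.ι_sq_zero _
lemma e_swap (i j : Fin 6) (_h : j < i) : e i * e j = -(e j * e i) := by
  have := ExteriorAlgebra.ι_add_mul_swap (R := ℝ) (ee i) (ee j)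
  unfold e; linear_combination (norm := noncomm_ring) this
lemma e_sq' (i : Fin 6) (x : ExteriorAlgebra ℝ V) : e i * (e i * x) = 0 := by
  rw [← mul_assoc, e_sq, zero_mul]
lemma e_swap' (i j : Fin 6) (h : j < i) (x : ExteriorAlgebra ℝ V) :
    e i * (e j * x) = -(e j * (e i * x)) := by
  rw [← mul_assoc, e_swap i j h, ← mul_assoc, neg_mul]

lemma flat_ee (i j : Fin 6) : flat (ee i) (ee j) = if i = j then 1 else 0 := by
  simp [flat, ee, Pi.single_apply]

lemma flat_ee' (i : Fin 6) : flat (ee i) = LinearMap.proj i := by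
  ext v; simp [flat, ee, Pi.single_apply]

lemma icontr_e (i j : Fin 6) : icontr (ee i) (e j) = if i = j then 1 else 0 := by
  rw [icontr, e, CliffordAlgebra.contractLeft_ι, flat_ee]
  split <;> simp

lemma icontr_mul (i j : Fin 6) (x : ExteriorAlgebra ℝ V) :
    icontr (ee i) (e j * x) = (if i = j then (1:ℝ) else 0) • x - e j * icontr (ee i) x := by
  rw [icontr, e, CliffordAlgebra.contractLeft_ι_mul, flat_ee]

set_option maxHeartbeats 1000000 in
lemma ic0 : icontr (ee 0) ψp = e 2 * e 4 - e 3 * e 5 := by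
  simp [ψp, mul_assoc, icontr_mul, icontr_e, mul_sub, sub_mul]
set_option maxHeartbeats 1000000 in
lemma ic1 : icontr (ee 1) ψp = -(e 2 * e 5) - e 3 * e 4 := by
  simp [ψp, mul_assoc, icontr_mul, icontr_e, mul_sub, sub_mul]
set_option maxHeartbeats 1000000 in
lemma ic2 : icontr (ee 2) ψp = -(e 0 * e 4) + e 1 * e 5 := by
  simp [ψp, mul_assoc, icontr_mul, icontr_e, mul_sub, sub_mul]
set_option maxHeartbeats 1000000 in
lemma ic3 : icontr (ee 3) ψp = e 0 * e 5 + e 1 * e 4 := by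
  simp [ψp, mul_assoc, icontr_mul, icontr_e, mul_sub, sub_mul]
set_option maxHeartbeats 1000000 in
lemma ic4 : icontr (ee 4) ψp = e 0 * e 2 - e 1 * e 3 := by
  simp [ψp, mul_assoc, icontr_mul, icontr_e, mul_sub, sub_mul]
set_option maxHeartbeats 1000000 in
lemma ic5 : icontr (ee 5) ψp = -(e 0 * e 3) - e 1 * e 2 := by
  simp [ψp, mul_assoc, icontr_mul, icontr_e, mul_sub, sub_mul]

set_option maxHeartbeats 1000000 in
lemma main0 : ψp * (e 2 * e 4 - e 3 * e 5) = e 0 * (ω * ω) := by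
  simp only [ψp, ω, mul_sub, sub_mul, mul_add, add_mul, mul_assoc, mul_neg, neg_mul,
    e_swap, e_swap', e_sq, e_sq', Fin.reduceLT, mul_zero, zero_mul, neg_neg, neg_zero,
    sub_zero, zero_sub, add_zero, zero_add, sub_neg_eq_add]

set_option maxHeartbeats 1000000 in
lemma main1 : ψp * (-(e 2 * e 5) - e 3 * e 4) = e 1 * (ω * ω) := by
  simp only [ψp, ω, mul_sub, sub_mul, mul_add, add_mul, mul_assoc, mul_neg, neg_mul,
    e_swap, e_swap', e_sq, e_sq', Fin.reduceLT, mul_zero, zero_mul, neg_neg, neg_zero,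
    sub_zero, zero_sub, add_zero, zero_add, sub_neg_eq_add]

set_option maxHeartbeats 1000000 in
lemma main2 : ψp * (-(e 0 * e 4) + e 1 * e 5) = e 2 * (ω * ω) := by
  simp only [ψp, ω, mul_sub, sub_mul, mul_add, add_mul, mul_assoc, mul_neg, neg_mul,
    e_swap, e_swap', e_sq, e_sq', Fin.reduceLT, mul_zero, zero_mul, neg_neg, neg_zero,
    sub_zero, zero_sub, add_zero, zero_add, sub_neg_eq_add]

set_option maxHeartbeats 1000000 in
lemma main3 : ψp * (e 0 * e 5 + e 1 * e 4) = e 3 * (ω * ω) := by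
  simp only [ψp, ω, mul_sub, sub_mul, mul_add, add_mul, mul_assoc, mul_neg, neg_mul,
    e_swap, e_swap', e_sq, e_sq', Fin.reduceLT, mul_zero, zero_mul, neg_neg, neg_zero,
    sub_zero, zero_sub, add_zero, zero_add, sub_neg_eq_add]

set_option maxHeartbeats 1000000 in
lemma main4 : ψp * (e 0 * e 2 - e 1 * e 3) = e 4 * (ω * ω) := by
  simp only [ψp, ω, mul_sub, sub_mul, mul_add, add_mul, mul_assoc, mul_neg, neg_mul,
    e_swap, e_swap', e_sq, e_sq', Fin.reduceLT, mul_zero, zero_mul, neg_neg, neg_zero,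
    sub_zero, zero_sub, add_zero, zero_add, sub_neg_eq_add]

set_option maxHeartbeats 1000000 in
lemma main5 : ψp * (-(e 0 * e 3) - e 1 * e 2) = e 5 * (ω * ω) := by
  simp only [ψp, ω, mul_sub, sub_mul, mul_add, add_mul, mul_assoc, mul_neg, neg_mul,
    e_swap, e_swap', e_sq, e_sq', Fin.reduceLT, mul_zero, zero_mul, neg_neg, neg_zero,
    sub_zero, zero_sub, add_zero, zero_add, sub_neg_eq_add]

theorem stmt3 (X : V) : ψp * icontr X ψp = ExteriorAlgebra.ι ℝ X * (ω * ω) := by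
  have hflat : flat X = ∑ i, X i • flat (ee i) := by
    simp only [flat_ee']; rfl
  have hX : X = ∑ i, X i • ee i := by
    ext j; simp [ee, Pi.single_apply]
  have hicontr : icontr X ψp = ∑ i, X i • icontr (ee i) ψp := by
    rw [icontr, hflat]; simp [icontr]
  have hι : ExteriorAlgebra.ι ℝ X = ∑ i, X i • e i := by
    conv_lhs => rw [hX]
    simp [e]
  rw [hicontr, hι, Finset.mul_sum, Finset.sum_mul]
  refine Finset.sum_congr rfl fun i _ => ?_
  rw [mul_smul_comm, smul_mul_assoc]
  congr 1
  fin_cases i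
  · show ψp * icontr (ee 0) ψp = e 0 * (ω * ω)
    rw [ic0]; exact main0
  · show ψp * icontr (ee 1) ψp = e 1 * (ω * ω)
    rw [ic1]; exact main1
  · show ψp * icontr (ee 2) ψp = e 2 * (ω * ω)
    rw [ic2]; exact main2
  · show ψp * icontr (ee 3) ψp = e 3 * (ω * ω)
    rw [ic3]; exact main3
  · show ψp * icontr (ee 4) ψp = e 4 * (ω * ω)
    rw [ic4]; exact main4
  · show ψp * icontr (ee 5) ψp = e 5 * (ω * ω)
    rw [ic5]; exact main5
end

section
/- Any endomorphism F of R^6 anti-commuting with the standard complex structure J can be written uniquely as F = S + ψ⁺_ξ, where S is symmetric and anti-commutes with J, ξ ∈ R^6, and ψ⁺_ξ is the skew-symmetric endomorphism defined by ⟨ψ⁺_ξ X, Y⟩ = ψ⁺(ξ, X, Y). -/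
open Matrix

/-- the matrix of the standard complex structure -/
def Jm : Matrix (Fin 6) (Fin 6) ℝ :=
  !![0,-1,0,0,0,0; 1,0,0,0,0,0; 0,0,0,-1,0,0; 0,0,1,0,0,0; 0,0,0,0,0,-1; 0,0,0,0,1,0]

/-- the basis 3-form `e^{a+1,b+1,c+1}` evaluated on three vectors -/
def f3 (a b c : Fin 6) (X Y Z : V) : ℝ :=
  Matrix.det !![X a, X b, X c; Y a, Y b, Y c; Z a, Z b, Z c]

/-- `ψ⁺ = e^{135} - e^{146} - e^{236} - e^{245}` as a trilinear alternating function -/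
def psiP (X Y Z : V) : ℝ :=
  f3 0 2 4 X Y Z - f3 0 3 5 X Y Z - f3 1 2 5 X Y Z - f3 1 3 4 X Y Z

/-- `ψ⁻ = e^{136} + e^{145} + e^{235} - e^{246}` as a trilinear alternating function -/
def psiM (X Y Z : V) : ℝ :=
  f3 0 2 5 X Y Z + f3 0 3 4 X Y Z + f3 1 2 4 X Y Z - f3 1 3 5 X Y Z

/-- the fundamental 2-form `ω = e^{12} + e^{34} + e^{56}` evaluated on two vectors -/
def om (X Y : V) : ℝ :=
  (X 0 * Y 1 - X 1 * Y 0) + (X 2 * Y 3 - X 3 * Y 2) + (X 4 * Y 5 - X 5 * Y 4)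

/-- the skew-symmetric endomorphism `ψ⁺_ξ` defined by `⟨ψ⁺_ξ X, Y⟩ = ψ⁺(ξ, X, Y)` -/
def Pm (ξ : V) : Matrix (Fin 6) (Fin 6) ℝ := Matrix.of fun i j => psiP ξ (ee j) (ee i)

section CVlemmas
variable {α : Type*} (x0 x1 x2 x3 x4 x5 : α)
lemma cv0 : ![x0,x1,x2,x3,x4,x5] 0 = x0 := rfl
lemma cv1 : ![x0,x1,x2,x3,x4,x5] 1 = x1 := rfl
lemma cv2 : ![x0,x1,x2,x3,x4,x5] 2 = x2 := rfl
lemma cv3 : ![x0,x1,x2,x3,x4,x5] 3 = x3 := rfl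
lemma cv4 : ![x0,x1,x2,x3,x4,x5] 4 = x4 := rfl
lemma cv5 : ![x0,x1,x2,x3,x4,x5] 5 = x5 := rfl
lemma cvm0 (h : 0 < 6) : ![x0,x1,x2,x3,x4,x5] ⟨0,h⟩ = x0 := rfl
lemma cvm1 (h : 1 < 6) : ![x0,x1,x2,x3,x4,x5] ⟨1,h⟩ = x1 := rfl
lemma cvm2 (h : 2 < 6) : ![x0,x1,x2,x3,x4,x5] ⟨2,h⟩ = x2 := rfl
lemma cvm3 (h : 3 < 6) : ![x0,x1,x2,x3,x4,x5] ⟨3,h⟩ = x3 := rfl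
lemma cvm4 (h : 4 < 6) : ![x0,x1,x2,x3,x4,x5] ⟨4,h⟩ = x4 := rfl
lemma cvm5 (h : 5 < 6) : ![x0,x1,x2,x3,x4,x5] ⟨5,h⟩ = x5 := rfl
end CVlemmas

lemma fin6cases (P : Fin 6 → Prop) (h0 : P 0) (h1 : P 1) (h2 : P 2) (h3 : P 3)
    (h4 : P 4) (h5 : P 5) : ∀ i, P i := by
  intro i; fin_cases i <;> assumption

lemma vec_eta {α : Type*} (v : Fin 6 → α) : ![v 0, v 1, v 2, v 3, v 4, v 5] = v := by
  funext k; fin_cases k <;> rfl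

set_option maxHeartbeats 1000000 in
lemma Pm_eq (ξ : V) : Pm ξ =
    !![0, 0, -ξ 4, ξ 5, ξ 2, -ξ 3;
       0, 0, ξ 5, ξ 4, -ξ 3, -ξ 2;
       ξ 4, -ξ 5, 0, 0, -ξ 0, ξ 1;
       -ξ 5, -ξ 4, 0, 0, ξ 1, ξ 0;
       -ξ 2, ξ 3, ξ 0, -ξ 1, 0, 0;
       ξ 3, ξ 2, -ξ 1, -ξ 0, 0, 0] := by
  ext i j
  fin_cases i <;> fin_cases j <;>
    simp [Pm, psiP, f3, ee, Pi.single_apply, Matrix.det_fin_three,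
      cv0, cv1, cv2, cv3, cv4, cv5, cvm0, cvm1, cvm2, cvm3, cvm4, cvm5] <;>
    first | rfl | ring

set_option maxHeartbeats 1000000 in
lemma mulJm (A : Matrix (Fin 6) (Fin 6) ℝ) :
    A * Jm = Matrix.of fun i j => ![A i 1, -A i 0, A i 3, -A i 2, A i 5, -A i 4] j := by
  ext i j
  fin_cases j <;>
    simp only [Matrix.mul_apply, Matrix.of_apply, Jm, Fin.sum_univ_six,
      cv0, cv1, cv2, cv3, cv4, cv5, cvm0, cvm1, cvm2, cvm3, cvm4, cvm5] <;>
    ring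

set_option maxHeartbeats 1000000 in
lemma Jmmul (A : Matrix (Fin 6) (Fin 6) ℝ) :
    Jm * A = Matrix.of fun i j => ![-A 1 j, A 0 j, -A 3 j, A 2 j, -A 5 j, A 4 j] i := by
  ext i j
  fin_cases i <;>
    simp only [Matrix.mul_apply, Matrix.of_apply, Jm, Fin.sum_univ_six,
      cv0, cv1, cv2, cv3, cv4, cv5, cvm0, cvm1, cvm2, cvm3, cvm4, cvm5] <;>
    ring

set_option maxHeartbeats 4000000 in
theorem stmt12 (F : Matrix (Fin 6) (Fin 6) ℝ) (hF : F * Jm = -(Jm * F)) :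
    ∃! p : Matrix (Fin 6) (Fin 6) ℝ × V,
      p.1ᵀ = p.1 ∧ p.1 * Jm = -(Jm * p.1) ∧ F = p.1 + Pm p.2 := by
  rw [mulJm, Jmmul] at hF
  have hr00a : F 1 1 = -F 0 0 := by
    have h := congrFun (congrFun hF 0) 1
    simp only [cv0, cv1, cv2, cv3, cv4, cv5, cvm0, cvm1, cvm2, cvm3, cvm4, cvm5, Matrix.of_apply, Matrix.neg_apply] at h
    linarith
  have hr00b : F 1 0 = F 0 1 := by
    have h := congrFun (congrFun hF 0) 0
    simp only [cv0, cv1, cv2, cv3, cv4, cv5, cvm0, cvm1, cvm2, cvm3, cvm4, cvm5, Matrix.of_apply, Matrix.neg_apply] at h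
    linarith
  have hr01a : F 1 3 = -F 0 2 := by
    have h := congrFun (congrFun hF 0) 3
    simp only [cv0, cv1, cv2, cv3, cv4, cv5, cvm0, cvm1, cvm2, cvm3, cvm4, cvm5, Matrix.of_apply, Matrix.neg_apply] at h
    linarith
  have hr01b : F 1 2 = F 0 3 := by
    have h := congrFun (congrFun hF 0) 2
    simp only [cv0, cv1, cv2, cv3, cv4, cv5, cvm0, cvm1, cvm2, cvm3, cvm4, cvm5, Matrix.of_apply, Matrix.neg_apply] at h
    linarith
  have hr02a : F 1 5 = -F 0 4 := by
    have h := congrFun (congrFun hF 0) 5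
    simp only [cv0, cv1, cv2, cv3, cv4, cv5, cvm0, cvm1, cvm2, cvm3, cvm4, cvm5, Matrix.of_apply, Matrix.neg_apply] at h
    linarith
  have hr02b : F 1 4 = F 0 5 := by
    have h := congrFun (congrFun hF 0) 4
    simp only [cv0, cv1, cv2, cv3, cv4, cv5, cvm0, cvm1, cvm2, cvm3, cvm4, cvm5, Matrix.of_apply, Matrix.neg_apply] at h
    linarith
  have hr10a : F 3 1 = -F 2 0 := by
    have h := congrFun (congrFun hF 2) 1
    simp only [cv0, cv1, cv2, cv3, cv4, cv5, cvm0, cvm1, cvm2, cvm3, cvm4, cvm5, Matrix.of_apply, Matrix.neg_apply] at h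
    linarith
  have hr10b : F 3 0 = F 2 1 := by
    have h := congrFun (congrFun hF 2) 0
    simp only [cv0, cv1, cv2, cv3, cv4, cv5, cvm0, cvm1, cvm2, cvm3, cvm4, cvm5, Matrix.of_apply, Matrix.neg_apply] at h
    linarith
  have hr11a : F 3 3 = -F 2 2 := by
    have h := congrFun (congrFun hF 2) 3
    simp only [cv0, cv1, cv2, cv3, cv4, cv5, cvm0, cvm1, cvm2, cvm3, cvm4, cvm5, Matrix.of_apply, Matrix.neg_apply] at h
    linarith
  have hr11b : F 3 2 = F 2 3 := by
    have h := congrFun (congrFun hF 2) 2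
    simp only [cv0, cv1, cv2, cv3, cv4, cv5, cvm0, cvm1, cvm2, cvm3, cvm4, cvm5, Matrix.of_apply, Matrix.neg_apply] at h
    linarith
  have hr12a : F 3 5 = -F 2 4 := by
    have h := congrFun (congrFun hF 2) 5
    simp only [cv0, cv1, cv2, cv3, cv4, cv5, cvm0, cvm1, cvm2, cvm3, cvm4, cvm5, Matrix.of_apply, Matrix.neg_apply] at h
    linarith
  have hr12b : F 3 4 = F 2 5 := by
    have h := congrFun (congrFun hF 2) 4
    simp only [cv0, cv1, cv2, cv3, cv4, cv5, cvm0, cvm1, cvm2, cvm3, cvm4, cvm5, Matrix.of_apply, Matrix.neg_apply] at h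
    linarith
  have hr20a : F 5 1 = -F 4 0 := by
    have h := congrFun (congrFun hF 4) 1
    simp only [cv0, cv1, cv2, cv3, cv4, cv5, cvm0, cvm1, cvm2, cvm3, cvm4, cvm5, Matrix.of_apply, Matrix.neg_apply] at h
    linarith
  have hr20b : F 5 0 = F 4 1 := by
    have h := congrFun (congrFun hF 4) 0
    simp only [cv0, cv1, cv2, cv3, cv4, cv5, cvm0, cvm1, cvm2, cvm3, cvm4, cvm5, Matrix.of_apply, Matrix.neg_apply] at h
    linarith
  have hr21a : F 5 3 = -F 4 2 := by
    have h := congrFun (congrFun hF 4) 3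
    simp only [cv0, cv1, cv2, cv3, cv4, cv5, cvm0, cvm1, cvm2, cvm3, cvm4, cvm5, Matrix.of_apply, Matrix.neg_apply] at h
    linarith
  have hr21b : F 5 2 = F 4 3 := by
    have h := congrFun (congrFun hF 4) 2
    simp only [cv0, cv1, cv2, cv3, cv4, cv5, cvm0, cvm1, cvm2, cvm3, cvm4, cvm5, Matrix.of_apply, Matrix.neg_apply] at h
    linarith
  have hr22a : F 5 5 = -F 4 4 := by
    have h := congrFun (congrFun hF 4) 5
    simp only [cv0, cv1, cv2, cv3, cv4, cv5, cvm0, cvm1, cvm2, cvm3, cvm4, cvm5, Matrix.of_apply, Matrix.neg_apply] at h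
    linarith
  have hr22b : F 5 4 = F 4 5 := by
    have h := congrFun (congrFun hF 4) 4
    simp only [cv0, cv1, cv2, cv3, cv4, cv5, cvm0, cvm1, cvm2, cvm3, cvm4, cvm5, Matrix.of_apply, Matrix.neg_apply] at h
    linarith
  refine ⟨⟨F - Pm ![(F 4 2 - F 2 4)/2, (F 2 5 - F 5 2)/2, (F 0 4 - F 4 0)/2, (F 5 0 - F 0 5)/2, (F 2 0 - F 0 2)/2, (F 0 3 - F 3 0)/2], ![(F 4 2 - F 2 4)/2, (F 2 5 - F 5 2)/2, (F 0 4 - F 4 0)/2, (F 5 0 - F 0 5)/2, (F 2 0 - F 0 2)/2, (F 0 3 - F 3 0)/2]⟩, ⟨?_, ?_, by rw [sub_add_cancel]⟩, ?_⟩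
  · rw [Pm_eq]
    refine Matrix.ext_iff.mp (fin6cases _ ?_ ?_ ?_ ?_ ?_ ?_) <;>
      refine fin6cases _ ?_ ?_ ?_ ?_ ?_ ?_ <;>
      simp only [cv0, cv1, cv2, cv3, cv4, cv5, cvm0, cvm1, cvm2, cvm3, cvm4, cvm5, Matrix.transpose_apply, Matrix.sub_apply, Matrix.of_apply] <;>
      linarith [hr00a, hr00b, hr01a, hr01b, hr02a, hr02b, hr10a, hr10b, hr11a, hr11b, hr12a, hr12b, hr20a, hr20b, hr21a, hr21b, hr22a, hr22b]
  · rw [Pm_eq, mulJm, Jmmul]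
    refine Matrix.ext_iff.mp (fin6cases _ ?_ ?_ ?_ ?_ ?_ ?_) <;>
      refine fin6cases _ ?_ ?_ ?_ ?_ ?_ ?_ <;>
      simp only [cv0, cv1, cv2, cv3, cv4, cv5, cvm0, cvm1, cvm2, cvm3, cvm4, cvm5, Matrix.neg_apply, Matrix.sub_apply, Matrix.of_apply] <;>
      linarith [hr00a, hr00b, hr01a, hr01b, hr02a, hr02b, hr10a, hr10b, hr11a, hr11b, hr12a, hr12b, hr20a, hr20b, hr21a, hr21b, hr22a, hr22b]
  · rintro ⟨S, ξ⟩ ⟨hS, -, hFe⟩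
    have hs : ∀ i j, S j i = S i j := fun i j =>
      (congrFun (congrFun hS j) i).symm.trans (Matrix.transpose_apply S j i)
    rw [Pm_eq] at hFe
    have hf := fun (i j : Fin 6) => congrFun (congrFun hFe i) j
    have q42 := hf 4 2; have q24 := hf 2 4
    have q25 := hf 2 5; have q52 := hf 5 2
    have q04 := hf 0 4; have q40 := hf 4 0
    have q50 := hf 5 0; have q05 := hf 0 5
    have q20 := hf 2 0; have q02 := hf 0 2
    have q03 := hf 0 3; have q30 := hf 3 0
    simp only [cv0, cv1, cv2, cv3, cv4, cv5, cvm0, cvm1, cvm2, cvm3, cvm4, cvm5, Matrix.add_apply, Matrix.of_apply] at q42 q24 q25 q52 q04 q40 q50 q05 q20 q02 q03 q30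
    have hxi : ξ = ![(F 4 2 - F 2 4)/2, (F 2 5 - F 5 2)/2, (F 0 4 - F 4 0)/2, (F 5 0 - F 0 5)/2, (F 2 0 - F 0 2)/2, (F 0 3 - F 3 0)/2] := by
      have h0 : ξ 0 = (F 4 2 - F 2 4)/2 := by linarith [hs 4 2]
      have h1 : ξ 1 = (F 2 5 - F 5 2)/2 := by linarith [hs 2 5]
      have h2 : ξ 2 = (F 0 4 - F 4 0)/2 := by linarith [hs 0 4]
      have h3 : ξ 3 = (F 5 0 - F 0 5)/2 := by linarith [hs 5 0]
      have h4 : ξ 4 = (F 2 0 - F 0 2)/2 := by linarith [hs 2 0]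
      have h5 : ξ 5 = (F 0 3 - F 3 0)/2 := by linarith [hs 0 3]
      rw [← vec_eta ξ, h0, h1, h2, h3, h4, h5]
    rw [hxi] at hFe
    refine Prod.ext ?_ hxi
    show S = F - Pm ![(F 4 2 - F 2 4)/2, (F 2 5 - F 5 2)/2, (F 0 4 - F 4 0)/2, (F 5 0 - F 0 5)/2, (F 2 0 - F 0 2)/2, (F 0 3 - F 3 0)/2]
    rw [Pm_eq]
    exact eq_sub_of_add_eq hFe.symm
end
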